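/- Let L, σ, λ > 0 with λ ≤ σL, let f : ℝⁿ → ℝᵐ be L-Lipschitz, let y ∈ ℝⁿ, and let Z ∈ ℝ^{m×n} with ‖Z‖_F = 1. Let D be a random vector in ℝⁿ satisfying the tail bound P(‖D‖₂ ≥ ε) ≤ 2 exp(−ε²/(2σ²)) for all ε ≥ 0, and suppose that for every v ∈ ℝᵐ, E[⟨v, f(y + D)⟩²] ≥ λ² ‖v‖₂² (i.e., E[f(y+D) f(y+D)ᵀ] ⪰ λ² I_m). Then P( ‖Zᵀ f(y + D)‖₂ ≥ λ/2 ) ≥ c λ⁴ / (σ⁴ L⁴), where c = 1/1058. -/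

import Mathlib

open Matrix MeasureTheory
open scoped BigOperators

/-!
Write `S = ‖Zᵀ f(y + D)‖₂` and `A = ‖Zᵀ f(y)‖₂`. Lipschitz continuity and `‖Z‖_F = 1` give
`|S - A| ≤ L ‖D‖₂`, and the covariance bound applied to the columns of `Z` gives `E[S²] ≥ λ²`.
If `A ≥ λ/2 + 2σL`, then `S < λ/2` forces `‖D‖₂ ≥ 2σ`, an event of probability at most
`2e⁻² < 2/3`. Otherwise split `E[S²]` over `{S < λ/2}`, over `{S ≥ λ/2, ‖D‖₂ < T}`, where
`S ≤ A + LT`, and over `{‖D‖₂ ≥ T}`; the last part is summed over the annuli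
`(k+1)T ≤ ‖D‖₂ < (k+2)T` using the sub-Gaussian tail. For `T = 20σ²L/λ` it is at most `λ²/4`, so
`λ²/2 ≤ (A + LT)² P(S ≥ λ/2)` with `A + LT ≤ 23σ²L²/λ`.
-/

/-- Euclidean norm of a vector in `ℝ^k`. -/
noncomputable def e2norm {k : ℕ} (v : Fin k → ℝ) : ℝ := Real.sqrt (∑ i, (v i) ^ 2)

/-- Frobenius norm of a real matrix. -/
noncomputable def frob {a b : ℕ} (M : Matrix (Fin a) (Fin b) ℝ) : ℝ :=
  Real.sqrt (∑ i, ∑ j, (M i j) ^ 2)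

section Norms

variable {k a b : ℕ}

lemma e2norm_eq_norm_toLp (v : Fin k → ℝ) : e2norm v = ‖WithLp.toLp 2 v‖ := by
  simp [EuclideanSpace.norm_eq, e2norm]

lemma e2norm_nonneg (v : Fin k → ℝ) : 0 ≤ e2norm v := Real.sqrt_nonneg _

lemma e2norm_sq (v : Fin k → ℝ) : e2norm v ^ 2 = ∑ i, v i ^ 2 :=
  Real.sq_sqrt (by positivity)

lemma e2norm_eq_zero {v : Fin k → ℝ} : e2norm v = 0 ↔ v = 0 := by
  simp [e2norm_eq_norm_toLp]

lemma abs_e2norm_sub_e2norm_le (u v : Fin k → ℝ) : |e2norm u - e2norm v| ≤ e2norm (u - v) := by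
  simpa only [e2norm_eq_norm_toLp, WithLp.toLp_sub] using abs_norm_sub_norm_le _ _

lemma continuous_e2norm : Continuous (e2norm : (Fin k → ℝ) → ℝ) := by
  simpa only [funext e2norm_eq_norm_toLp] using (PiLp.continuous_toLp 2 _).norm

lemma continuous_of_e2norm_lipschitz {f : (Fin a → ℝ) → (Fin b → ℝ)} {L : ℝ}
    (hf : ∀ u v, e2norm (f u - f v) ≤ L * e2norm (u - v)) : Continuous f := by
  let F : EuclideanSpace ℝ (Fin a) → EuclideanSpace ℝ (Fin b) := fun x => WithLp.toLp 2 (f x.ofLp)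
  have hF : LipschitzWith L.toNNReal F := LipschitzWith.of_dist_le' fun x x' => by
    simpa only [dist_eq_norm, e2norm_eq_norm_toLp, WithLp.toLp_sub] using hf x.ofLp x'.ofLp
  exact (PiLp.continuous_ofLp 2 _).comp (hF.continuous.comp (PiLp.continuous_toLp 2 _))

lemma transpose_mulVec_apply (Z : Matrix (Fin a) (Fin b) ℝ) (w : Fin a → ℝ) (j : Fin b) :
    (Zᵀ *ᵥ w) j = ∑ i, Z i j * w i := by
  simp [mulVec, dotProduct]

lemma frob_nonneg (Z : Matrix (Fin a) (Fin b) ℝ) : 0 ≤ frob Z := Real.sqrt_nonneg _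

lemma frob_sq (Z : Matrix (Fin a) (Fin b) ℝ) : frob Z ^ 2 = ∑ j, e2norm (fun i => Z i j) ^ 2 := by
  rw [frob, Real.sq_sqrt (by positivity), Finset.sum_comm]
  simp only [e2norm_sq]

lemma e2norm_transpose_mulVec_le (Z : Matrix (Fin a) (Fin b) ℝ) (w : Fin a → ℝ) :
    e2norm (Zᵀ *ᵥ w) ≤ frob Z * e2norm w := by
  refine (pow_le_pow_iff_left₀ (e2norm_nonneg _) (mul_nonneg (frob_nonneg Z) (e2norm_nonneg w))
    two_ne_zero).mp ?_
  rw [mul_pow, frob_sq, Finset.sum_mul, e2norm_sq]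
  refine Finset.sum_le_sum fun j _ => ?_
  rw [transpose_mulVec_apply, e2norm_sq, e2norm_sq]
  exact Finset.sum_mul_sq_le_sq_mul_sq _ _ _

lemma abs_e2norm_transpose_mulVec_sub_le (Z : Matrix (Fin b) (Fin k) ℝ)
    {f : (Fin a → ℝ) → (Fin b → ℝ)} {L : ℝ} (hf : ∀ u v, e2norm (f u - f v) ≤ L * e2norm (u - v))
    (u v : Fin a → ℝ) :
    |e2norm (Zᵀ *ᵥ f u) - e2norm (Zᵀ *ᵥ f v)| ≤ frob Z * (L * e2norm (u - v)) := calc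
  _ ≤ e2norm (Zᵀ *ᵥ (f u - f v)) := by rw [mulVec_sub]; exact abs_e2norm_sub_e2norm_le _ _
  _ ≤ frob Z * e2norm (f u - f v) := e2norm_transpose_mulVec_le Z _
  _ ≤ frob Z * (L * e2norm (u - v)) := mul_le_mul_of_nonneg_left (hf u v) (frob_nonneg Z)

end Norms

section SecondMoment

variable {Ω : Type*} [MeasurableSpace Ω] {μ : Measure Ω} {m n : ℕ} {G : Ω → Fin m → ℝ} {lam : ℝ}

lemma integrable_sq_of_sq_mul_le_integral (hlam : lam ≠ 0)
    (hmin : ∀ v : Fin m → ℝ, lam ^ 2 * e2norm v ^ 2 ≤ ∫ ω, (∑ i, v i * G ω i) ^ 2 ∂μ)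
    (v : Fin m → ℝ) : Integrable (fun ω => (∑ i, v i * G ω i) ^ 2) μ := by
  -- a non-integrable function has integral `0`, which `hmin` allows only for `v = 0`
  by_contra hv
  have hle := hmin v
  rw [integral_undef hv] at hle
  have : v = 0 := e2norm_eq_zero.mp <| pow_eq_zero_iff two_ne_zero |>.mp <|
    le_antisymm (nonpos_of_mul_nonpos_right hle (by positivity)) (sq_nonneg _)
  subst this
  simp at hv

lemma integrable_e2norm_transpose_mulVec_sq (hlam : lam ≠ 0)
    (hmin : ∀ v : Fin m → ℝ, lam ^ 2 * e2norm v ^ 2 ≤ ∫ ω, (∑ i, v i * G ω i) ^ 2 ∂μ)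
    (Z : Matrix (Fin m) (Fin n) ℝ) : Integrable (fun ω => e2norm (Zᵀ *ᵥ G ω) ^ 2) μ := by
  simp only [e2norm_sq, transpose_mulVec_apply]
  exact integrable_finsetSum _ fun j _ => integrable_sq_of_sq_mul_le_integral hlam hmin _

lemma sq_mul_frob_sq_le_integral (hlam : lam ≠ 0)
    (hmin : ∀ v : Fin m → ℝ, lam ^ 2 * e2norm v ^ 2 ≤ ∫ ω, (∑ i, v i * G ω i) ^ 2 ∂μ)
    (Z : Matrix (Fin m) (Fin n) ℝ) : lam ^ 2 * frob Z ^ 2 ≤ ∫ ω, e2norm (Zᵀ *ᵥ G ω) ^ 2 ∂μ := by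
  simp only [e2norm_sq, transpose_mulVec_apply]
  rw [integral_finsetSum _ fun j _ => integrable_sq_of_sq_mul_le_integral hlam hmin _,
    frob_sq, Finset.mul_sum]
  exact Finset.sum_le_sum fun j _ => hmin _

end SecondMoment

lemma sq_mul_exp_le_geometric {s : ℝ} (hs : 0 ≤ s) (k : ℕ) :
    ((k : ℝ) + 2) ^ 2 * Real.exp (-((k + 1) ^ 2 * s)) ≤ (4 * Real.exp (-s)) ^ (k + 1) := by
  have hk : ((k : ℝ) + 2) ^ 2 ≤ 4 ^ (k + 1) := by
    have : ((k + 2 : ℕ) : ℝ) ≤ 2 ^ (k + 1) := by exact_mod_cast Nat.lt_two_pow_self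
    rw [show (4 : ℝ) ^ (k + 1) = (2 ^ (k + 1)) ^ 2 by rw [← pow_mul, mul_comm, pow_mul]; norm_num]
    push_cast at this
    gcongr
  have hexp : Real.exp (-((k + 1) ^ 2 * s)) ≤ Real.exp (-s) ^ (k + 1) := by
    rw [← Real.exp_nat_mul, Real.exp_le_exp]
    push_cast
    nlinarith [mul_nonneg (Nat.cast_nonneg (α := ℝ) k) hs, mul_nonneg (sq_nonneg (k : ℝ)) hs]
  rw [mul_pow]
  exact mul_le_mul hk hexp (Real.exp_pos _).le (by positivity)

lemma summable_sq_mul_exp_and_tsum_le {s : ℝ} (hs : 8 * Real.exp (-s) ≤ 1) :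
    Summable (fun k : ℕ => ((k : ℝ) + 2) ^ 2 * Real.exp (-((k + 1) ^ 2 * s))) ∧
      ∑' k : ℕ, ((k : ℝ) + 2) ^ 2 * Real.exp (-((k + 1) ^ 2 * s)) ≤ 8 * Real.exp (-s) := by
  set q := 4 * Real.exp (-s)
  have hs0 : 0 ≤ s := by
    by_contra h
    linarith [Real.add_one_le_exp (-s)]
  have hq0 : 0 ≤ q := by positivity
  have hq1 : q < 1 := by linarith
  have hgeom : HasSum (fun k : ℕ => q ^ (k + 1)) (q * (1 - q)⁻¹) := by
    simpa only [pow_succ'] using (hasSum_geometric_of_lt_one hq0 hq1).mul_left q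
  have hnonneg (k : ℕ) : 0 ≤ ((k : ℝ) + 2) ^ 2 * Real.exp (-((k + 1) ^ 2 * s)) := by positivity
  have hsum := hgeom.summable.of_nonneg_of_le hnonneg (sq_mul_exp_le_geometric hs0)
  refine ⟨hsum, (hsum.tsum_le_tsum (sq_mul_exp_le_geometric hs0) hgeom.summable).trans ?_⟩
  rw [hgeom.tsum_eq, ← div_eq_mul_inv, div_le_iff₀ (by linarith)]
  nlinarith

section SmallBall

variable {Ω : Type*} [MeasurableSpace Ω] {μ : Measure Ω} {S R : Ω → ℝ}

lemma setIntegral_le_tsum_of_annuli [IsFiniteMeasure μ] {X : Ω → ℝ} {T : ℝ} (hT : 0 < T)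
    (hR : Measurable R) (hX : Integrable X μ) (hX0 : ∀ ω, 0 ≤ X ω) {b p : ℕ → ℝ}
    (hb0 : ∀ k, 0 ≤ b k) (hb : ∀ (k : ℕ) ω, R ω < (k + 2) * T → X ω ≤ b k)
    (hp : ∀ k : ℕ, μ.real {ω | (k + 1) * T ≤ R ω} ≤ p k) (hsum : Summable fun k => b k * p k) :
    ∫ ω in {ω | T ≤ R ω}, X ω ∂μ ≤ ∑' k, b k * p k := by
  -- the annulus `(k + 1) T ≤ R < (k + 2) T`, as a fiber so that disjointness is free
  let annulus (k : ℕ) : Set Ω := (fun ω => ⌊R ω / T⌋₊) ⁻¹' {k + 1}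
  have mem_annulus (k : ℕ) (ω : Ω) : ω ∈ annulus k ↔ (k + 1) * T ≤ R ω ∧ R ω < (k + 2) * T := by
    simp only [annulus, Set.mem_preimage, Set.mem_singleton_iff, Nat.floor_eq_iff' k.succ_ne_zero,
      le_div_iff₀ hT, div_lt_iff₀ hT]
    push_cast; ring_nf
  have hmeas (k : ℕ) : MeasurableSet (annulus k) :=
    (hR.div_const T).nat_floor (measurableSet_singleton _)
  have hdisj : Pairwise (Function.onFun Disjoint annulus) := fun k l hkl =>
    Set.disjoint_left.mpr fun ω hk hl => hkl <| by
      simp only [annulus, Set.mem_preimage, Set.mem_singleton_iff] at hk hl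
      omega
  have hunion : {ω | T ≤ R ω} = ⋃ k, annulus k := by
    ext ω
    simp only [Set.mem_ofPred_eq, Set.mem_iUnion, annulus, Set.mem_preimage,
      Set.mem_singleton_iff]
    rw [← one_le_div hT, ← Nat.one_le_floor_iff]
    exact ⟨fun h => ⟨_, (Nat.sub_add_cancel h).symm⟩, by rintro ⟨k, hk⟩; omega⟩
  have hk (k : ℕ) : ∫ ω in annulus k, X ω ∂μ ≤ b k * p k := calc
    ∫ ω in annulus k, X ω ∂μ ≤ ∫ _ in annulus k, b k ∂μ :=
      setIntegral_mono_on hX.integrableOn (integrableOn_const (measure_ne_top μ _)) (hmeas k)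
        fun ω hω => hb k ω ((mem_annulus k ω).mp hω).2
    _ = b k * μ.real (annulus k) := by rw [setIntegral_const, smul_eq_mul, mul_comm]
    _ ≤ b k * p k := mul_le_mul_of_nonneg_left
      ((measureReal_mono fun ω hω => ((mem_annulus k ω).mp hω).1).trans (hp k)) (hb0 k)
  rw [hunion, integral_iUnion hmeas hdisj hX.integrableOn]
  exact Summable.tsum_le_tsum hk
    (hsum.of_nonneg_of_le (fun k => setIntegral_nonneg (hmeas k) fun ω _ => hX0 ω) hk) hsum

lemma integral_sq_le_add_mul_measureReal_add_setIntegral [IsProbabilityMeasure μ] {T M : ℝ}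
    (τ : ℝ) (hS0 : ∀ ω, 0 ≤ S ω) (hS : Measurable S) (hR : Measurable R)
    (hint : Integrable (fun ω => S ω ^ 2) μ) (hM : ∀ ω, R ω < T → S ω ≤ M) :
    ∫ ω, S ω ^ 2 ∂μ ≤ τ ^ 2 + M ^ 2 * μ.real {ω | τ ≤ S ω} + ∫ ω in {ω | T ≤ R ω}, S ω ^ 2 ∂μ := by
  have hE : MeasurableSet {ω | τ ≤ S ω} := measurableSet_le measurable_const hS
  have hF : MeasurableSet {ω | T ≤ R ω} := measurableSet_le measurable_const hR
  have hpoint (ω : Ω) : S ω ^ 2 ≤ τ ^ 2 + {ω | τ ≤ S ω}.indicator (fun _ => M ^ 2) ω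
      + {ω | T ≤ R ω}.indicator (fun ω => S ω ^ 2) ω := by
    by_cases hTR : T ≤ R ω
    · simp only [Set.indicator_of_mem (show ω ∈ {ω | T ≤ R ω} from hTR)]
      have := Set.indicator_nonneg (fun _ _ => sq_nonneg M) ω (s := {ω | τ ≤ S ω})
      nlinarith
    by_cases hτS : τ ≤ S ω
    · simp only [Set.indicator_of_mem (show ω ∈ {ω | τ ≤ S ω} from hτS),
        Set.indicator_of_notMem (show ω ∉ {ω | T ≤ R ω} from hTR)]
      nlinarith [pow_le_pow_left₀ (hS0 ω) (hM ω (not_le.mp hTR)) 2]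
    · simp only [Set.indicator_of_notMem (show ω ∉ {ω | τ ≤ S ω} from hτS),
        Set.indicator_of_notMem (show ω ∉ {ω | T ≤ R ω} from hTR)]
      nlinarith [pow_le_pow_left₀ (hS0 ω) (not_le.mp hτS).le 2]
  have hconst : Integrable (fun ω => τ ^ 2 + {ω | τ ≤ S ω}.indicator (fun _ => M ^ 2) ω) μ :=
    (integrable_const _).add ((integrable_const _).indicator hE)
  calc ∫ ω, S ω ^ 2 ∂μ
      ≤ ∫ ω, (τ ^ 2 + {ω | τ ≤ S ω}.indicator (fun _ => M ^ 2) ω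
          + {ω | T ≤ R ω}.indicator (fun ω => S ω ^ 2) ω) ∂μ :=
        integral_mono hint (hconst.add (hint.indicator hF)) hpoint
    _ = _ := by
      rw [integral_add hconst (hint.indicator hF),
        integral_add (integrable_const _) ((integrable_const _).indicator hE),
        integral_const, integral_indicator hE, integral_indicator hF, setIntegral_const]
      simp [mul_comm]

lemma setIntegral_sq_le_of_subgaussian [IsFiniteMeasure μ] {A L T σ : ℝ} (hA : 0 ≤ A)
    (hL : 0 ≤ L) (hT : 0 < T) (hS0 : ∀ ω, 0 ≤ S ω) (hSA : ∀ ω, S ω ≤ A + L * R ω)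
    (hR : Measurable R) (hint : Integrable (fun ω => S ω ^ 2) μ)
    (htail : ∀ ε : ℝ, 0 ≤ ε → μ.real {ω | ε ≤ R ω} ≤ 2 * Real.exp (-(ε ^ 2) / (2 * σ ^ 2)))
    (hs : 8 * Real.exp (-(T ^ 2 / (2 * σ ^ 2))) ≤ 1) :
    ∫ ω in {ω | T ≤ R ω}, S ω ^ 2 ∂μ ≤
      16 * (A + L * T) ^ 2 * Real.exp (-(T ^ 2 / (2 * σ ^ 2))) := by
  set s := T ^ 2 / (2 * σ ^ 2)
  obtain ⟨hsum, htsum⟩ := summable_sq_mul_exp_and_tsum_le hs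
  have hb (k : ℕ) (ω : Ω) (hω : R ω < (k + 2) * T) : S ω ^ 2 ≤ ((k + 2) * (A + L * T)) ^ 2 := by
    refine pow_le_pow_left₀ (hS0 ω) ((hSA ω).trans ?_) 2
    have : L * R ω ≤ L * ((k + 2) * T) := mul_le_mul_of_nonneg_left hω.le hL
    nlinarith [mul_nonneg (Nat.cast_nonneg (α := ℝ) k) hA]
  have hp (k : ℕ) : μ.real {ω | (k + 1) * T ≤ R ω} ≤ 2 * Real.exp (-((k + 1) ^ 2 * s)) := by
    convert htail ((k + 1) * T) (by positivity) using 3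
    simp only [s]
    ring
  have hbp : (fun k : ℕ => ((k + 2) * (A + L * T)) ^ 2 * (2 * Real.exp (-((k + 1) ^ 2 * s))))
      = fun k : ℕ => 2 * (A + L * T) ^ 2 * (((k : ℝ) + 2) ^ 2 * Real.exp (-((k + 1) ^ 2 * s))) := by
    ext k; ring
  calc ∫ ω in {ω | T ≤ R ω}, S ω ^ 2 ∂μ
      ≤ ∑' k : ℕ, ((k + 2) * (A + L * T)) ^ 2 * (2 * Real.exp (-((k + 1) ^ 2 * s))) :=
        setIntegral_le_tsum_of_annuli hT hR hint (fun ω => sq_nonneg _) (fun _ => sq_nonneg _) hb hp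
          (hbp ▸ hsum.mul_left _)
    _ = 2 * (A + L * T) ^ 2 * ∑' k : ℕ, ((k : ℝ) + 2) ^ 2 * Real.exp (-((k + 1) ^ 2 * s)) := by
      rw [hbp, tsum_mul_left]
    _ ≤ 2 * (A + L * T) ^ 2 * (8 * Real.exp (-s)) := by gcongr
    _ = 16 * (A + L * T) ^ 2 * Real.exp (-s) := by ring

lemma sq_le_measureReal_of_truncation [IsProbabilityMeasure μ] {A L T σ lam : ℝ} (hA : 0 ≤ A)
    (hL : 0 ≤ L) (hT : 0 < T) (hS0 : ∀ ω, 0 ≤ S ω) (hSA : ∀ ω, S ω ≤ A + L * R ω)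
    (hS : Measurable S) (hR : Measurable R) (hint : Integrable (fun ω => S ω ^ 2) μ)
    (htail : ∀ ε : ℝ, 0 ≤ ε → μ.real {ω | ε ≤ R ω} ≤ 2 * Real.exp (-(ε ^ 2) / (2 * σ ^ 2)))
    (hs : 8 * Real.exp (-(T ^ 2 / (2 * σ ^ 2))) ≤ 1)
    (hsmall : 64 * (A + L * T) ^ 2 * Real.exp (-(T ^ 2 / (2 * σ ^ 2))) ≤ lam ^ 2)
    (hmom : lam ^ 2 ≤ ∫ ω, S ω ^ 2 ∂μ) :
    lam ^ 2 ≤ 2 * (A + L * T) ^ 2 * μ.real {ω | lam / 2 ≤ S ω} := by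
  have hsplit := integral_sq_le_add_mul_measureReal_add_setIntegral (μ := μ) (T := T)
    (M := A + L * T) (lam / 2) hS0 hS hR hint fun ω hω => (hSA ω).trans (by gcongr)
  have htail_int := setIntegral_sq_le_of_subgaussian hA hL hT hS0 hSA hR hint htail hs
  nlinarith

lemma measureReal_lt_le_of_le_add [IsFiniteMeasure μ] {A L τ ε : ℝ} (hL : 0 < L)
    (hAS : ∀ ω, A ≤ S ω + L * R ω) (hA : τ + L * ε ≤ A) :
    μ.real {ω | S ω < τ} ≤ μ.real {ω | ε ≤ R ω} :=
  measureReal_mono fun ω (hω : S ω < τ) =>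
    show ε ≤ R ω from le_of_mul_le_mul_left (by linarith [hAS ω]) hL

lemma one_third_le_measureReal_of_far [IsProbabilityMeasure μ] {A L σ τ : ℝ} (hL : 0 < L)
    (hσ : 0 < σ) (hAS : ∀ ω, A ≤ S ω + L * R ω) (hfar : τ + 2 * σ * L ≤ A) (hS : Measurable S)
    (htail : μ.real {ω | 2 * σ ≤ R ω} ≤ 2 * Real.exp (-((2 * σ) ^ 2) / (2 * σ ^ 2))) :
    1 / 3 ≤ μ.real {ω | τ ≤ S ω} := by
  have hlt := measureReal_lt_le_of_le_add (μ := μ) hL hAS (τ := τ) (ε := 2 * σ) (by linarith)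
  have hcompl : μ.real {ω | S ω < τ} = 1 - μ.real {ω | τ ≤ S ω} := by
    rw [← probReal_compl_eq_one_sub (measurableSet_le measurable_const hS)]
    congr 1
    ext ω
    simp
  have hexp : 2 * Real.exp (-((2 * σ) ^ 2) / (2 * σ ^ 2)) ≤ 2 / 3 := by
    rw [show -((2 * σ) ^ 2) / (2 * σ ^ 2) = -2 by field_simp, Real.exp_neg,
      ← div_eq_mul_inv, div_le_div_iff₀ (Real.exp_pos 2) (by norm_num)]
    linarith [Real.add_one_le_exp 2]
  linarith

lemma le_measureReal_of_near [IsProbabilityMeasure μ] {A L σ lam : ℝ} (hL : 0 < L) (hσ : 0 < σ)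
    (hlam : 0 < lam) (hlamle : lam ≤ σ * L) (hA : 0 ≤ A) (hnear : A ≤ lam / 2 + 2 * σ * L)
    (hS0 : ∀ ω, 0 ≤ S ω) (hSA : ∀ ω, S ω ≤ A + L * R ω) (hS : Measurable S) (hR : Measurable R)
    (hint : Integrable (fun ω => S ω ^ 2) μ)
    (htail : ∀ ε : ℝ, 0 ≤ ε → μ.real {ω | ε ≤ R ω} ≤ 2 * Real.exp (-(ε ^ 2) / (2 * σ ^ 2)))
    (hmom : lam ^ 2 ≤ ∫ ω, S ω ^ 2 ∂μ) :
    1 / 1058 * lam ^ 4 / (σ ^ 4 * L ^ 4) ≤ μ.real {ω | lam / 2 ≤ S ω} := by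
  set r := σ * L / lam
  have hσL : σ * L = r * lam := by simp only [r]; field_simp
  have hr : 1 ≤ r := by rwa [one_le_div hlam]
  -- `T = 20σ²L/λ`: then `A + LT ≤ 23 r²λ`, and `e^{T²/2σ²} = e^{200 r²} ≥ 64 ⬝ 23² r⁴` makes the
  -- tail beyond `T` at most `λ²/4`
  set T := 20 * r * σ
  have hT : 0 < T := by positivity
  have hLT : L * T = 20 * r ^ 2 * lam := by linear_combination 20 * r * hσL
  have hs : T ^ 2 / (2 * σ ^ 2) = 200 * r ^ 2 := by field_simp; ring
  have hM : A + L * T ≤ 23 * r ^ 2 * lam := by nlinarith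
  have hexp : 33856 * r ^ 4 * Real.exp (-(200 * r ^ 2)) ≤ 1 := by
    have := Real.pow_div_factorial_le_exp (200 * r ^ 2) (by positivity) 3
    rw [Real.exp_neg, ← div_eq_mul_inv, div_le_one (Real.exp_pos _)]
    have h64 : r ^ 4 ≤ r ^ 6 := pow_le_pow_right₀ hr (by norm_num)
    norm_num [Nat.factorial] at this
    nlinarith
  have hM2 : (A + L * T) ^ 2 ≤ 529 * r ^ 4 * lam ^ 2 := by
    nlinarith [pow_le_pow_left₀ (by positivity) hM 2]
  have hsmall : 64 * (A + L * T) ^ 2 * Real.exp (-(200 * r ^ 2)) ≤ lam ^ 2 := by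
    nlinarith [Real.exp_pos (-(200 * r ^ 2))]
  have hmain := sq_le_measureReal_of_truncation hA hL.le hT hS0 hSA hS hR hint htail
    (by rw [hs]; nlinarith [pow_le_pow_left₀ zero_le_one hr 4]) (by rwa [hs]) hmom
  have hP : 0 ≤ μ.real {ω | lam / 2 ≤ S ω} := measureReal_nonneg
  have hfinal : lam ^ 2 ≤ 1058 * r ^ 4 * lam ^ 2 * μ.real {ω | lam / 2 ≤ S ω} := by nlinarith
  rw [show σ ^ 4 * L ^ 4 = (r * lam) ^ 4 by rw [← hσL]; ring, div_le_iff₀ (by positivity)]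
  nlinarith [mul_le_mul_of_nonneg_left hfinal (sq_nonneg lam)]

lemma le_measureReal_of_abs_sub_le [IsProbabilityMeasure μ] {A L σ lam : ℝ} (hL : 0 < L)
    (hσ : 0 < σ) (hlam : 0 < lam) (hlamle : lam ≤ σ * L) (hA : 0 ≤ A) (hS0 : ∀ ω, 0 ≤ S ω)
    (hSA : ∀ ω, |S ω - A| ≤ L * R ω) (hS : Measurable S) (hR : Measurable R)
    (hint : Integrable (fun ω => S ω ^ 2) μ)
    (htail : ∀ ε : ℝ, 0 ≤ ε → μ.real {ω | ε ≤ R ω} ≤ 2 * Real.exp (-(ε ^ 2) / (2 * σ ^ 2)))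
    (hmom : lam ^ 2 ≤ ∫ ω, S ω ^ 2 ∂μ) :
    1 / 1058 * lam ^ 4 / (σ ^ 4 * L ^ 4) ≤ μ.real {ω | lam / 2 ≤ S ω} := by
  by_cases hfar : lam / 2 + 2 * σ * L ≤ A
  · refine le_trans ?_ <| one_third_le_measureReal_of_far hL hσ
      (fun ω => by linarith [(abs_le.mp (hSA ω)).1]) hfar hS (htail _ (by positivity))
    rw [div_le_iff₀ (by positivity)]
    nlinarith [pow_le_pow_left₀ hlam.le hlamle 4]
  · exact le_measureReal_of_near hL hσ hlam hlamle hA (not_le.mp hfar).le hS0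
      (fun ω => by linarith [(abs_le.mp (hSA ω)).2]) hS hR hint htail hmom

end SmallBall

/-- Lemma 6.1, small-ball anti-concentration.
Let `λ ≤ σL`, `f` `L`-Lipschitz, `‖Z‖_F = 1`, and let `D` be a sub-Gaussian random
vector with tail `P(‖D‖₂ ≥ ε) ≤ 2 exp(−ε²/(2σ²))` such that
`E[⟨v, f(y+D)⟩²] ≥ λ²‖v‖₂²` for all `v`. Then
`P(‖Zᵀ f(y+D)‖₂ ≥ λ/2) ≥ (1/1058) λ⁴/(σ⁴ L⁴)`. -/
theorem small_ball_lemma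
    {Ω : Type*} [MeasurableSpace Ω] (μ : Measure Ω) [IsProbabilityMeasure μ]
    (n m : ℕ) (L σ lam : ℝ)
    (hL : 0 < L) (hσ : 0 < σ) (hlam : 0 < lam) (hlamle : lam ≤ σ * L)
    (f : (Fin n → ℝ) → (Fin m → ℝ))
    (hf : ∀ u v : Fin n → ℝ, e2norm (f u - f v) ≤ L * e2norm (u - v))
    (y : Fin n → ℝ) (Z : Matrix (Fin m) (Fin n) ℝ) (hZ : frob Z = 1)
    (D : Ω → (Fin n → ℝ)) (hD : Measurable D)
    (htail : ∀ ε : ℝ, 0 ≤ ε →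
        μ {ω | ε ≤ e2norm (D ω)} ≤ ENNReal.ofReal (2 * Real.exp (-(ε ^ 2) / (2 * σ ^ 2))))
    (hmin : ∀ v : Fin m → ℝ,
        lam ^ 2 * (e2norm v) ^ 2 ≤ ∫ ω, (∑ i, v i * f (y + D ω) i) ^ 2 ∂μ) :
    ENNReal.ofReal ((1 / 1058) * lam ^ 4 / (σ ^ 4 * L ^ 4)) ≤
      μ {ω | lam / 2 ≤ e2norm (Zᵀ.mulVec (f (y + D ω)))} := by
  have hS : Measurable fun ω => e2norm (Zᵀ *ᵥ f (y + D ω)) :=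
    (continuous_e2norm.comp ((continuous_const.matrix_mulVec continuous_id).comp
      (continuous_of_e2norm_lipschitz hf))).measurable.comp (measurable_const.add hD)
  have hdev (ω : Ω) : |e2norm (Zᵀ *ᵥ f (y + D ω)) - e2norm (Zᵀ *ᵥ f y)| ≤ L * e2norm (D ω) := by
    simpa [hZ] using abs_e2norm_transpose_mulVec_sub_le Z hf (y + D ω) y
  have hmom := sq_mul_frob_sq_le_integral hlam.ne' hmin Z
  rw [hZ, one_pow, mul_one] at hmom
  exact ENNReal.ofReal_le_of_le_toReal <|
    le_measureReal_of_abs_sub_le hL hσ hlam hlamle (e2norm_nonneg _) (fun _ => e2norm_nonneg _)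
      hdev hS (continuous_e2norm.measurable.comp hD)
      (integrable_e2norm_transpose_mulVec_sq hlam.ne' hmin Z)
      (fun ε hε => ENNReal.toReal_le_of_le_ofReal (by positivity) (htail ε hε)) hmom
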